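/- Let s ∈ (1/2,1), λ₁ > 0, λ₂ ∈ ℝ with 0 < |λ₂| < c(λ₁) := 2s·(λ₁/(2s−1))^((2s−1)/(2s)). Using the principal branch of z ↦ z^{2s} on ℂ∖(−∞,0], define λ̃(z) = (λ₁ + z^{2s})² − λ₂²z². Then λ̃ has no multiple zeros: for every z₀ ∈ ℂ∖(−∞,0] with λ̃(z₀) = 0, one has λ̃′(z₀) ≠ 0. -/

import Mathlib

/-!
At a multiple zero `z` of `(a + z^p)² - c² z²`, multiplying `λ̃′(z) = 0` by `z` and using `λ̃(z) = 0`
gives `(a + z^p)(p z^p - (a + z^p)) = 0`, and `a + z^p ≠ 0` when `c z ≠ 0`; hence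
`(p - 1) z^p = a` and `(p z^p)² = c² z²`. For `p = 2s`, `a = λ₁`, `c = λ₂` this makes
`z^{2s} = λ₁/(2s-1)` a positive real and forces `z` onto the positive real axis, where the two
equations pin `|λ₂|` to exactly `c(λ₁)`, contradicting the strict inequality.
-/

open Real Complex

section MultipleZero

variable {a c p z : ℂ}

theorem hasDerivAt_add_cpow_sq_sub_sq (hz : z ∈ slitPlane) :
    HasDerivAt (fun x : ℂ => (a + x ^ p) ^ 2 - c ^ 2 * x ^ 2)
      (2 * (a + z ^ p) * (p * z ^ (p - 1)) - c ^ 2 * (2 * z)) z := by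
  have hsq := ((hasStrictDerivAt_cpow_const (c := p) hz).hasDerivAt.const_add a).fun_pow 2
  exact (hsq.fun_sub ((hasDerivAt_pow 2 z).const_mul (c ^ 2))).congr_deriv (by norm_num)

theorem cpow_eq_of_multiple_zero (hz : z ≠ 0) (hc : c ≠ 0)
    (h0 : (a + z ^ p) ^ 2 - c ^ 2 * z ^ 2 = 0)
    (h1 : 2 * (a + z ^ p) * (p * z ^ (p - 1)) - c ^ 2 * (2 * z) = 0) :
    (p - 1) * z ^ p = a ∧ (p * z ^ p) ^ 2 = c ^ 2 * z ^ 2 := by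
  have hpow : z ^ (p - 1) * z = z ^ p := by
    rw [cpow_sub _ _ hz, cpow_one, div_mul_cancel₀ _ hz]
  have hfactor : (a + z ^ p) * (p * z ^ p - (a + z ^ p)) = 0 := by
    linear_combination z / 2 * h1 - (a + z ^ p) * p * hpow - h0
  have hne : a + z ^ p ≠ 0 := by
    intro h
    rw [h] at h0
    exact mul_ne_zero (pow_ne_zero 2 hc) (pow_ne_zero 2 hz) (by linear_combination -h0)
  have hlin : p * z ^ p = a + z ^ p :=
    sub_eq_zero.mp ((mul_eq_zero.mp hfactor).resolve_left hne)
  exact ⟨by linear_combination hlin, by rw [hlin]; linear_combination h0⟩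

end MultipleZero

theorem Complex.eq_ofReal_of_sq_eq_of_mem_slitPlane {z : ℂ} {r : ℝ} (hr : 0 < r)
    (hz : z ∈ slitPlane) (h : z ^ 2 = (r : ℂ) ^ 2) : z = r := by
  have hfactor : (z - r) * (z + r) = 0 := by linear_combination h
  refine sub_eq_zero.mp ((mul_eq_zero.mp hfactor).resolve_right fun hneg => ?_)
  rw [eq_neg_of_add_eq_zero_left hneg, neg_ofReal_mem_slitPlane] at hz
  exact hr.not_gt hz

theorem Real.rpow_rpow_sub_one_div {r q : ℝ} (hr : 0 ≤ r) (hq : q ≠ 0) :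
    (r ^ q) ^ ((q - 1) / q) = r ^ (q - 1) := by
  rw [← rpow_mul hr, mul_div_cancel₀ _ hq]

theorem abs_eq_of_multiple_zero {s lam1 lam2 : ℝ} (hs : 1 / 2 < s) (hlam1 : 0 < lam1)
    (hlam2 : lam2 ≠ 0) {z : ℂ} (hz : z ∈ slitPlane)
    (h0 : ((lam1 : ℂ) + z ^ (2 * s : ℂ)) ^ 2 - (lam2 : ℂ) ^ 2 * z ^ 2 = 0)
    (h1 : deriv (fun x : ℂ => ((lam1 : ℂ) + x ^ (2 * s : ℂ)) ^ 2 - (lam2 : ℂ) ^ 2 * x ^ 2) z = 0) :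
    |lam2| = 2 * s * (lam1 / (2 * s - 1)) ^ ((2 * s - 1) / (2 * s)) := by
  rw [(hasDerivAt_add_cpow_sq_sub_sq hz).deriv] at h1
  obtain ⟨hlin, hsq⟩ :=
    cpow_eq_of_multiple_zero (slitPlane_ne_zero hz) (ofReal_ne_zero.mpr hlam2) h0 h1
  have h2s1 : 0 < 2 * s - 1 := by linarith
  set A := lam1 / (2 * s - 1)
  have hw : z ^ (2 * s : ℂ) = A := by
    have hne : (2 * s - 1 : ℂ) ≠ 0 := by exact_mod_cast h2s1.ne'
    push_cast [A]
    rw [eq_div_iff hne, mul_comm, hlin]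
  set r := 2 * s * A / |lam2|
  have hr : 0 < r := by positivity
  have hzr : z = r := by
    refine eq_ofReal_of_sq_eq_of_mem_slitPlane hr hz ?_
    have hr2 : r ^ 2 = (2 * s * A) ^ 2 / lam2 ^ 2 := by rw [div_pow, sq_abs]
    rw [← ofReal_pow, hr2]
    push_cast
    rw [eq_div_iff (by exact_mod_cast pow_ne_zero 2 hlam2), ← hw]
    linear_combination -hsq
  have hrA : r ^ (2 * s) = A := by
    have hcast := ofReal_cpow hr.le (2 * s)
    push_cast at hcast
    rw [hzr, ← hcast] at hw
    exact_mod_cast hw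
  calc |lam2| = 2 * s * A / r := (div_div_cancel₀ (by positivity)).symm
    _ = 2 * s * (r ^ (2 * s)) ^ ((2 * s - 1) / (2 * s)) := by
      rw [rpow_rpow_sub_one_div hr.le (by positivity), rpow_sub_one hr.ne', hrA]; ring
    _ = _ := by rw [hrA]

/-- For `s ∈ (1/2,1)`, `λ₁ > 0` and `0 < |λ₂| < c(λ₁)`, the analytic function
`λ̃(z) = (λ₁ + z^{2s})² - λ₂² z²` (principal branch of the power on the slit plane
`ℂ ∖ (-∞,0]`) has no multiple zeros: at any zero `z₀` in the slit plane, `λ̃′(z₀) ≠ 0`. -/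
theorem tilde_lambda_no_multiple_zeros (s lam1 lam2 : ℝ)
    (hs : s ∈ Set.Ioo (1/2 : ℝ) 1) (hlam1 : 0 < lam1)
    (hlam2pos : 0 < |lam2|)
    (hlam2 : |lam2| < 2*s*(lam1/(2*s-1))^((2*s-1)/(2*s))) :
    ∀ z₀ ∈ Complex.slitPlane,
      ((lam1 : ℂ) + z₀ ^ (2*s : ℂ))^2 - (lam2:ℂ)^2 * z₀^2 = 0 →
      deriv (fun z : ℂ => ((lam1 : ℂ) + z ^ (2*s : ℂ))^2 - (lam2:ℂ)^2 * z^2) z₀ ≠ 0 := by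
  intro z₀ hz₀ h0 h1
  exact hlam2.ne (abs_eq_of_multiple_zero hs.1 hlam1 (abs_pos.mp hlam2pos) hz₀ h0 h1)
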